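/- arXiv:2503.04060 — 3 statements merged into one kernel-verified Lean document; each statement's English description precedes it below -/
import Mathlib

section
/- For the Erdős–Rényi random graph G(n,p) and integers 1 <= m, l <= n-1, the covariance of the numbers of (m+1)-stars S_{m+1,n}^{(1)} and (l+1)-stars S_{l+1,n}^{(1)} both centered at vertex 1 equals sum_{s = max(1, m+l-n+1)}^{min(m,l)} multinomial(n-1; s, m-s, l-s, n-m-l+s-1) * p^{m+l-s} * (1 - p^s), where multinomial(n-1; a,b,c,d) = (n-1)!/(a! b! c! d!). -/
open MeasureTheory ProbabilityTheory Finset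
open scoped Nat

/-!
The edge indicators are `0`/`1`-valued, so `(∏_{j ∈ A} X₁ⱼ) (∏_{j ∈ B} X₁ⱼ) = ∏_{j ∈ A ∪ B} X₁ⱼ`,
and independence turns every pair `(A, B)` into a contribution
`p^{|A ∪ B|} - p^{|A|} p^{|B|} = p^{m+l-s} (1 - p^s)` to the covariance, where `s = |A ∩ B|`.
It remains to count the pairs of an `m`-set and an `l`-set among the `n - 1` other vertices
meeting in exactly `s` points: choosing `A`, then `A ∩ B ⊆ A`, then `B \ A` in the complement of
`A` gives the multinomial coefficient.
-/

theorem Finset.prod_mul_prod_eq_prod_union_of_isIdempotentElem {α M : Type*} [CommMonoid M]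
    [DecidableEq α] {f : α → M} (hf : ∀ j, IsIdempotentElem (f j)) (A B : Finset α) :
    (∏ j ∈ A, f j) * ∏ j ∈ B, f j = ∏ j ∈ A ∪ B, f j := by
  rw [← prod_union_inter, ← prod_sdiff (inter_subset_union (s := A) (t := B)), mul_assoc,
    ← prod_mul_distrib, prod_congr rfl fun j _ => hf j]

theorem Finset.card_powersetCard_filter_card_inter {α : Type*} [DecidableEq α] {E A : Finset α}
    (hA : A ⊆ E) {l s : ℕ} (hs : s ≤ l) :
    #{B ∈ E.powersetCard l | #(A ∩ B) = s} = (#A).choose s * (#E - #A).choose (l - s) := by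
  rw [← card_powersetCard, ← card_sdiff_of_subset hA, ← card_powersetCard, ← card_product]
  refine card_nbij' (fun B => (A ∩ B, B \ A)) (fun q => q.1 ∪ q.2) ?_ ?_ ?_ ?_
  · rintro B hB
    simp only [coe_filter, mem_powersetCard, Set.mem_ofPred_eq, coe_product, Set.mem_prod,
      mem_coe] at hB ⊢
    obtain ⟨⟨hBE, rfl⟩, rfl⟩ := hB
    have := card_sdiff_add_card_inter B A
    refine ⟨⟨inter_subset_left, rfl⟩, sdiff_subset_sdiff hBE subset_rfl, ?_⟩
    rw [inter_comm] at this
    omega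
  · rintro ⟨C, D⟩ hCD
    simp only [coe_filter, mem_powersetCard, Set.mem_ofPred_eq, coe_product, Set.mem_prod,
      mem_coe] at hCD ⊢
    obtain ⟨⟨hCA, rfl⟩, hDE, hD⟩ := hCD
    have hAD : Disjoint A D := disjoint_of_subset_right hDE disjoint_sdiff
    refine ⟨⟨union_subset (hCA.trans hA) (hDE.trans sdiff_subset), ?_⟩, ?_⟩
    · rw [card_union_of_disjoint (disjoint_of_subset_left hCA hAD)]
      omega
    · rw [inter_union_distrib_left, inter_eq_right.2 hCA, disjoint_iff_inter_eq_empty.1 hAD,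
        union_empty]
  · intro B _
    dsimp only
    rw [inter_comm, union_comm, sdiff_union_inter]
  · rintro ⟨C, D⟩ hCD
    simp only [coe_product, Set.mem_prod, mem_coe, mem_powersetCard] at hCD
    obtain ⟨⟨hCA, -⟩, hDE, -⟩ := hCD
    have hAD : Disjoint A D := disjoint_of_subset_right hDE disjoint_sdiff
    dsimp only
    rw [inter_union_distrib_left, inter_eq_right.2 hCA, disjoint_iff_inter_eq_empty.1 hAD,
      union_empty, union_sdiff_distrib, sdiff_eq_empty_iff_subset.2 hCA, empty_union,
      hAD.sdiff_eq_right]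

theorem Nat.choose_mul_choose_mul_choose_eq_factorial_div {N m l s : ℕ} (hsm : s ≤ m)
    (hsl : s ≤ l) (h : m + l ≤ N + s) :
    N.choose m * (m.choose s * (N - m).choose (l - s)) =
      N ! / (s ! * (m - s)! * (l - s)! * (N - (m - s) - (l - s) - s)!) := by
  have hd : N - (m - s) - (l - s) - s = N - m - (l - s) := by omega
  rw [hd]
  refine (Nat.div_eq_of_eq_mul_left (by positivity) ?_).symm
  calc N ! = N.choose m * m ! * (N - m)! := (choose_mul_factorial_mul_factorial (by omega)).symm
    _ = N.choose m * (m.choose s * s ! * (m - s)!) *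
          ((N - m).choose (l - s) * (l - s)! * (N - m - (l - s))!) := by
      rw [choose_mul_factorial_mul_factorial hsm,
        choose_mul_factorial_mul_factorial (n := N - m) (k := l - s) (by omega)]
    _ = _ := by ring

theorem Finset.sum_powersetCard_sum_powersetCard_card_inter {α M : Type*} [DecidableEq α]
    [AddCommMonoid M] (E : Finset α) (m l : ℕ) (f : ℕ → M) :
    ∑ A ∈ E.powersetCard m, ∑ B ∈ E.powersetCard l, f #(A ∩ B) =
      ∑ s ∈ Icc (m + l - #E) (min m l),
        ((#E)! / (s ! * (m - s)! * (l - s)! * (#E - (m - s) - (l - s) - s)!)) • f s := by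
  have hfiber : ∀ A ∈ E.powersetCard m, ∑ B ∈ E.powersetCard l, f #(A ∩ B) =
      ∑ s ∈ Icc (m + l - #E) (min m l), (m.choose s * (#E - m).choose (l - s)) • f s := by
    intro A hA
    rw [mem_powersetCard] at hA
    rw [← sum_fiberwise_of_maps_to (g := fun B => #(A ∩ B)) (t := Icc (m + l - #E) (min m l))]
    · refine sum_congr rfl fun s hs => ?_
      rw [sum_congr rfl fun B hB => congrArg f (mem_filter.1 hB).2, sum_const,
        card_powersetCard_filter_card_inter hA.1 ((mem_Icc.1 hs).2.trans (min_le_right _ _)), hA.2]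
    · intro B hB
      rw [mem_powersetCard] at hB
      have := card_union_add_card_inter A B
      have := card_le_card (union_subset hA.1 hB.1)
      have := card_le_card (inter_subset_left (s₁ := A) (s₂ := B))
      have := card_le_card (inter_subset_right (s₁ := A) (s₂ := B))
      simp only [mem_Icc]
      omega
  rw [sum_congr rfl hfiber, sum_const, card_powersetCard, smul_sum]
  refine sum_congr rfl fun s hs => ?_
  rw [mem_Icc] at hs
  rw [smul_smul, Nat.choose_mul_choose_mul_choose_eq_factorial_div] <;> omega

section
variable {Ω ι : Type*} [MeasurableSpace Ω] {μ : Measure Ω} {p : ℝ}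

theorem integral_eq_measureReal_of_zero_or_one {Y : Ω → ℝ} (hY : Measurable Y)
    (h01 : ∀ ω, Y ω = 0 ∨ Y ω = 1) : ∫ ω, Y ω ∂μ = μ.real {ω | Y ω = 1} := by
  have hind : Y = (Y ⁻¹' {1}).indicator 1 := by
    ext ω
    rcases h01 ω with h | h <;> simp [h]
  calc ∫ ω, Y ω ∂μ = ∫ ω, (Y ⁻¹' {1}).indicator 1 ω ∂μ := by rw [← hind]
    _ = μ.real (Y ⁻¹' {1}) := integral_indicator_one (hY (measurableSet_singleton 1))

theorem integrable_prod_of_zero_or_one [IsFiniteMeasure μ] {Y : ι → Ω → ℝ}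
    (hmeas : ∀ j, Measurable (Y j)) (h01 : ∀ j ω, Y j ω = 0 ∨ Y j ω = 1) (S : Finset ι) :
    Integrable (fun ω => ∏ j ∈ S, Y j ω) μ := by
  refine .of_bound (by fun_prop) 1 (ae_of_all _ fun ω => ?_)
  rw [norm_prod]
  exact prod_le_one (fun _ _ => norm_nonneg _) fun j _ => by rcases h01 j ω with h | h <;> simp [h]

theorem integral_prod_eq_pow_of_iIndepFun [IsProbabilityMeasure μ] {Y : ι → Ω → ℝ}
    (hindep : iIndepFun Y μ) (hmeas : ∀ j, Measurable (Y j)) (hmean : ∀ j, ∫ ω, Y j ω ∂μ = p)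
    (S : Finset ι) : ∫ ω, ∏ j ∈ S, Y j ω ∂μ = p ^ #S := by
  have := (hindep.precomp (g := ((↑) : S → ι)) Subtype.val_injective
    ).integral_fun_prod_eq_prod_integral fun j => (hmeas j).aestronglyMeasurable
  simp only [hmean, prod_const, card_univ, Fintype.card_coe] at this
  rwa [← funext fun ω => prod_coe_sort S (Y · ω)]

theorem integral_prod_star_eq_pow [IsProbabilityMeasure μ] {V : Type*} [LinearOrder V]
    {X : V → V → Ω → ℝ} (hmeas : ∀ i j, Measurable (X i j))
    (h01 : ∀ i j ω, X i j ω = 0 ∨ X i j ω = 1)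
    (hbern : ∀ i j, i ≠ j → μ {ω | X i j ω = 1} = ENNReal.ofReal p) (hp : 0 ≤ p)
    (hindep : iIndepFun (fun (q : {q : V × V // q.1 < q.2}) ω => X q.1.1 q.1.2 ω) μ)
    {v : V} {S : Finset V} (hS : ∀ j ∈ S, v < j) :
    ∫ ω, ∏ j ∈ S, X v j ω ∂μ = p ^ #S := by
  have hstar : iIndepFun (fun (j : {j // v < j}) => X v j) μ :=
    hindep.precomp (g := fun j : {j // v < j} => (⟨(v, j.1), j.2⟩ : {q : V × V // q.1 < q.2}))
      fun _ _ h => Subtype.ext (congrArg (·.1.2) h)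
  have hmean (j : {j // v < j}) : ∫ ω, X v j ω ∂μ = p := by
    rw [integral_eq_measureReal_of_zero_or_one (hmeas v j) (h01 v j), measureReal_def,
      hbern v j j.2.ne, ENNReal.toReal_ofReal hp]
  have := integral_prod_eq_pow_of_iIndepFun hstar (fun j => hmeas v j) hmean (S.subtype (v < ·))
  rwa [funext fun ω => prod_subtype_of_mem (X v · ω) hS, card_subtype,
    filter_true_of_mem hS] at this

theorem integral_sum_powersetCard_prod_mul_sub [IsFiniteMeasure μ] [DecidableEq ι] {Y : ι → Ω → ℝ}
    {E : Finset ι} (hmeas : ∀ j, Measurable (Y j)) (h01 : ∀ j ω, Y j ω = 0 ∨ Y j ω = 1)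
    (hmom : ∀ S ⊆ E, ∫ ω, ∏ j ∈ S, Y j ω ∂μ = p ^ #S) (m l : ℕ) :
    (∫ ω, (∑ A ∈ E.powersetCard m, ∏ j ∈ A, Y j ω) *
        (∑ B ∈ E.powersetCard l, ∏ j ∈ B, Y j ω) ∂μ) -
      (∫ ω, ∑ A ∈ E.powersetCard m, ∏ j ∈ A, Y j ω ∂μ) *
        (∫ ω, ∑ B ∈ E.powersetCard l, ∏ j ∈ B, Y j ω ∂μ) =
      ∑ A ∈ E.powersetCard m, ∑ B ∈ E.powersetCard l,
        p ^ (m + l - #(A ∩ B)) * (1 - p ^ #(A ∩ B)) := by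
  have hint := integrable_prod_of_zero_or_one (μ := μ) hmeas h01
  have hmean (k : ℕ) : ∫ ω, ∑ A ∈ E.powersetCard k, ∏ j ∈ A, Y j ω ∂μ =
      ∑ A ∈ E.powersetCard k, p ^ k := by
    rw [integral_finsetSum _ fun A _ => hint A]
    exact sum_congr rfl fun A hA => by
      rw [hmom A (mem_powersetCard.1 hA).1, (mem_powersetCard.1 hA).2]
  have hmixed : ∫ ω, (∑ A ∈ E.powersetCard m, ∏ j ∈ A, Y j ω) *
      (∑ B ∈ E.powersetCard l, ∏ j ∈ B, Y j ω) ∂μ =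
      ∑ A ∈ E.powersetCard m, ∑ B ∈ E.powersetCard l, p ^ #(A ∪ B) := by
    have hidem (ω) (j) : IsIdempotentElem (Y j ω) := by
      rcases h01 j ω with h | h <;> simp [h, IsIdempotentElem]
    simp_rw [sum_mul_sum, prod_mul_prod_eq_prod_union_of_isIdempotentElem (hidem _)]
    rw [integral_finsetSum _ fun A _ => integrable_finsetSum _ fun B _ => hint _]
    refine sum_congr rfl fun A hA => ?_
    rw [integral_finsetSum _ fun B _ => hint _]
    exact sum_congr rfl fun B hB =>
      hmom _ (union_subset (mem_powersetCard.1 hA).1 (mem_powersetCard.1 hB).1)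
  rw [hmixed, hmean, hmean, sum_mul_sum, ← sum_sub_distrib]
  refine sum_congr rfl fun A hA => ?_
  rw [← sum_sub_distrib]
  refine sum_congr rfl fun B hB => ?_
  rw [mem_powersetCard] at hA hB
  have hcard := card_union_add_card_inter A B
  have hunion : #(A ∪ B) = m + l - #(A ∩ B) := by omega
  have hsplit : p ^ m * p ^ l = p ^ (m + l - #(A ∩ B)) * p ^ #(A ∩ B) := by
    rw [← pow_add, ← pow_add, Nat.sub_add_cancel (by omega)]
  rw [hunion, hsplit]
  ring
end

/-- Covariance of the numbers of `(m+1)`-stars and `(l+1)`-stars both centered at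
vertex `1` (here `⟨0, _⟩ : Fin n`) in `G(n,p)`:
`Cov = ∑_s multinomial(n-1; s, m-s, l-s, n-1-m-l+s) p^{m+l-s}(1-p^s)`. -/
theorem stmt_5 (n m l : ℕ) (hn : 2 ≤ n)
    (p : ℝ) (hp0 : 0 ≤ p)
    {Ω : Type*} [MeasurableSpace Ω] (μ : Measure Ω) [IsProbabilityMeasure μ]
    (X : Fin n → Fin n → Ω → ℝ)
    (hmeas : ∀ i j, Measurable (X i j))
    (h01 : ∀ i j ω, X i j ω = 0 ∨ X i j ω = 1)
    (hbern : ∀ i j, i ≠ j → μ {ω | X i j ω = 1} = ENNReal.ofReal p)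
    (hindep : iIndepFun
      (fun (q : {q : Fin n × Fin n // q.1 < q.2}) ω => X q.1.1 q.1.2 ω) μ)
    (v1 : Fin n) (hv1 : v1 = ⟨0, by omega⟩) :
    (∫ ω, (∑ A ∈ (Finset.univ.erase v1).powersetCard m, ∏ j ∈ A, X v1 j ω) *
          (∑ B ∈ (Finset.univ.erase v1).powersetCard l, ∏ j ∈ B, X v1 j ω) ∂μ) -
      (∫ ω, ∑ A ∈ (Finset.univ.erase v1).powersetCard m, ∏ j ∈ A, X v1 j ω ∂μ) *
      (∫ ω, ∑ B ∈ (Finset.univ.erase v1).powersetCard l, ∏ j ∈ B, X v1 j ω ∂μ) =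
      ∑ s ∈ Finset.Icc (max 1 (m + l + 1 - n)) (min m l),
        (((n - 1).factorial / (s.factorial * (m - s).factorial * (l - s).factorial *
            (n - 1 - (m - s) - (l - s) - s).factorial) : ℕ) : ℝ) *
          p ^ (m + l - s) * (1 - p ^ s) := by
  have hstar : ∀ j ∈ univ.erase v1, v1 < j := fun j hj => by
    subst hv1
    exact Fin.lt_def.2 (Nat.pos_of_ne_zero fun h => (mem_erase.1 hj).1 (Fin.ext h))
  have hmom (S : Finset (Fin n)) (hS : S ⊆ univ.erase v1) : ∫ ω, ∏ j ∈ S, X v1 j ω ∂μ = p ^ #S :=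
    integral_prod_star_eq_pow hmeas h01 hbern hp0 hindep fun j hj => hstar j (hS hj)
  have hcard : #(univ.erase v1) = n - 1 := by simp
  rw [integral_sum_powersetCard_prod_mul_sub (hmeas v1) (h01 v1) hmom,
    sum_powersetCard_sum_powersetCard_card_inter (f := fun s => p ^ (m + l - s) * (1 - p ^ s)),
    hcard]
  simp only [nsmul_eq_mul, ← mul_assoc]
  refine (sum_subset (Icc_subset_Icc (by omega) le_rfl) fun s hs hs' => ?_).symm
  obtain rfl : s = 0 := by
    simp only [mem_Icc] at hs hs'
    omega
  simp
end

section
/- For any constant c > 0 and any positive integer k, the k x k matrix Σ with entries Σ_{m,l} = c^{m+l-1}/((m-1)!(l-1)!) + sum_{s=1}^{min(m,l)} c^{m+l-s}/(s!(m-s)!(l-s)!) (for 1 <= m, l <= k) has determinant det(Σ) = 2 * c^{k(k+1)/2} * prod_{m=1}^{k} 1/m!. In particular, Σ is nonsingular. -/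
/-!
Σ factors as `B D Bᵀ`, where `B = exp (c N)` for the nilpotent lower shift `N` (so
`B_{m,t} = c^{m-t}/(m-t)!`, lower unitriangular) and `D = diag (2c, c²/2!, …, c^k/k!)`. This is
the paper's column reduction in matrix form: `Σ_{m,l}` is a sum over `s ≤ min(m, l)` of
`B_{m,s} D_s B_{l,s}`. Hence `det Σ = det D`.
-/

open Finset Matrix Nat

@[to_additive]
theorem Finset.prod_range_shift_eq_prod_Icc {M : Type*} [CommMonoid M] (f : ℕ → M) (n : ℕ) :
    ∏ t ∈ range n, f (t + 1) = ∏ m ∈ Icc 1 n, f m := by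
  rw [← Finset.Ico_add_one_right_eq_Icc, Finset.prod_Ico_eq_prod_range, Nat.add_sub_cancel]
  simp only [add_comm]

theorem Matrix.det_mul_diagonal_mul_transpose_of_isLowerTriangular {n R : Type*} [Fintype n]
    [DecidableEq n] [LinearOrder n] [CommRing R] {B : Matrix n n R} (hB : B.IsLowerTriangular)
    (hdiag : ∀ i, B i i = 1) (d : n → R) :
    (B * diagonal d * Bᵀ).det = ∏ i, d i := by
  rw [det_mul, det_mul, det_transpose, det_of_isLowerTriangular B hB, det_diagonal]
  simp [hdiag]

section StarCovariance

variable {K : Type*} [Field K] (c : K)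

/-- The entries of `exp (c N)` for the lower shift matrix `N`. -/
def shiftExp (i t : ℕ) : K := if t ≤ i then c ^ (i - t) / (i - t)! else 0

theorem shiftExp_of_lt {i t : ℕ} (h : i < t) : shiftExp c i t = 0 := if_neg (not_le.2 h)

/-- The factor `2` at `t = 0` accounts for the first summand of `Σ_{m,l}`, which equals its
`s = 1` term. -/
def starWeight (t : ℕ) : K := (if t = 0 then 2 else 1) * (c ^ (t + 1) / (t + 1)!)

theorem shiftExp_mul_mul_shiftExp [CharZero K] {i j t : ℕ} (hi : t ≤ i) (hj : t ≤ j) :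
    shiftExp c i t * (c ^ (t + 1) / (t + 1)!) * shiftExp c j t =
      c ^ (i + 1 + (j + 1) - (t + 1)) / ((t + 1)! * (i + 1 - (t + 1))! * (j + 1 - (t + 1))!) := by
  obtain ⟨a, rfl⟩ := Nat.exists_eq_add_of_le hi
  obtain ⟨b, rfl⟩ := Nat.exists_eq_add_of_le hj
  simp only [shiftExp, if_pos hi, if_pos hj]
  rw [show t + a + 1 + (t + b + 1) - (t + 1) = a + (t + 1) + b by omega,
    show t + a + 1 - (t + 1) = a by omega, show t + b + 1 - (t + 1) = b by omega,
    Nat.add_sub_cancel_left, Nat.add_sub_cancel_left, pow_add, pow_add]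
  field_simp
  ring

theorem sum_shiftExp_mul_starWeight_mul_shiftExp [CharZero K] (i j : ℕ) :
    ∑ t ∈ range (min i j + 1), shiftExp c i t * starWeight c t * shiftExp c j t =
      c ^ (i + j + 1) / (i ! * j !) +
        ∑ s ∈ Icc 1 (min (i + 1) (j + 1)),
          c ^ (i + 1 + (j + 1) - s) / (s ! * (i + 1 - s)! * (j + 1 - s)!) := by
  set g : ℕ → K := fun s => c ^ (i + 1 + (j + 1) - s) / (s ! * (i + 1 - s)! * (j + 1 - s)!)
  have hterm : ∀ t ≤ min i j,
      shiftExp c i t * (c ^ (t + 1) / (t + 1)!) * shiftExp c j t = g (t + 1) := fun t ht =>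
    shiftExp_mul_mul_shiftExp c (ht.trans (min_le_left i j)) (ht.trans (min_le_right i j))
  have hg1 : c ^ (i + j + 1) / (i ! * j ! : K) = g 1 := by
    simp only [g, factorial_one, Nat.add_sub_cancel, cast_one, one_mul]
    congr 2
    omega
  have hhead : shiftExp c i 0 * starWeight c 0 * shiftExp c j 0 = 2 * g 1 := by
    rw [← hterm 0 (Nat.zero_le _), starWeight, if_pos rfl]
    ring
  have htail : ∀ t ∈ range (min i j),
      shiftExp c i (t + 1) * starWeight c (t + 1) * shiftExp c j (t + 1) = g (t + 1 + 1) := by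
    intro t ht
    rw [← hterm (t + 1) (mem_range.1 ht), starWeight, if_neg t.succ_ne_zero, one_mul]
  rw [Nat.add_min_add_right, ← sum_range_shift_eq_sum_Icc, sum_range_succ', sum_range_succ',
    sum_congr rfl htail, hhead, hg1]
  ring

theorem prod_starWeight {k : ℕ} (hk : 1 ≤ k) :
    ∏ t ∈ range k, starWeight c t = 2 * c ^ (k * (k + 1) / 2) * ∏ m ∈ Icc 1 k, 1 / (m ! : K) := by
  have hexp : ∑ t ∈ range k, (t + 1) = k * (k + 1) / 2 := by
    have := sum_range_succ' (fun t => t) k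
    simp only [add_zero] at this
    rw [← this, sum_range_id, Nat.add_sub_cancel, mul_comm]
  simp only [starWeight, div_eq_mul_one_div (c ^ _), prod_mul_distrib, prod_pow_eq_pow_sum,
    prod_ite_eq', mem_range, prod_range_shift_eq_prod_Icc (fun m => 1 / (m ! : K)), hexp]
  rw [if_pos (show 0 < k from hk), mul_assoc]

variable (k : ℕ)

/-- The entries of `exp (c N)` for the lower shift matrix `N`. -/
def shiftExpMatrix : Matrix (Fin k) (Fin k) K := of fun i t => shiftExp c i t

theorem shiftExpMatrix_isLowerTriangular : (shiftExpMatrix c k).IsLowerTriangular :=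
  fun _ _ h => shiftExp_of_lt c h

theorem shiftExpMatrix_diag (i : Fin k) : shiftExpMatrix c k i i = 1 := by
  simp [shiftExpMatrix, shiftExp]

theorem shiftExpMatrix_mul_diagonal_mul_transpose_apply (i j : Fin k) :
    (shiftExpMatrix c k * diagonal (fun t : Fin k => starWeight c t) * (shiftExpMatrix c k)ᵀ) i j =
      ∑ t ∈ range (min (i : ℕ) j + 1), shiftExp c i t * starWeight c t * shiftExp c j t := by
  rw [mul_apply]
  simp only [mul_diagonal, transpose_apply, shiftExpMatrix, of_apply]
  rw [Fin.sum_univ_eq_sum_range (fun t => shiftExp c i t * starWeight c t * shiftExp c j t)]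
  refine (sum_subset (range_subset_range.2 (by omega)) fun t _ ht => ?_).symm
  rcases le_or_gt t i with hi | hi
  · rw [shiftExp_of_lt c (i := j) (by rw [mem_range] at ht; omega), mul_zero]
  · rw [shiftExp_of_lt c hi, zero_mul, zero_mul]

end StarCovariance

/-- The limiting covariance matrix of normalized star counts when `np → c`:
its determinant is `2 c^{k(k+1)/2} ∏_{m=1}^k 1/m!`; in particular it is nonsingular.
Row/column `i : Fin k` corresponds to `m = i + 1`. -/
theorem stmt_12 (k : ℕ) (hk : 1 ≤ k) (c : ℝ) (hc : 0 < c)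
    (M : Matrix (Fin k) (Fin k) ℝ)
    (hM : ∀ i j : Fin k, M i j =
      c ^ ((i : ℕ) + (j : ℕ) + 1) / (((i : ℕ).factorial : ℝ) * ((j : ℕ).factorial : ℝ)) +
        ∑ s ∈ Finset.Icc 1 (min ((i : ℕ) + 1) ((j : ℕ) + 1)),
          c ^ ((i : ℕ) + 1 + ((j : ℕ) + 1) - s) /
            ((s.factorial : ℝ) * (((i : ℕ) + 1 - s).factorial : ℝ) *
              (((j : ℕ) + 1 - s).factorial : ℝ))) :
    M.det = 2 * c ^ (k * (k + 1) / 2) * ∏ m ∈ Finset.Icc 1 k, (1 / (m.factorial : ℝ)) ∧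
      M.det ≠ 0 := by
  have hfactor : M =
      shiftExpMatrix c k * diagonal (fun t : Fin k => starWeight c t) * (shiftExpMatrix c k)ᵀ := by
    ext i j
    rw [hM, shiftExpMatrix_mul_diagonal_mul_transpose_apply,
      sum_shiftExp_mul_starWeight_mul_shiftExp]
  have hdet : M.det = 2 * c ^ (k * (k + 1) / 2) * ∏ m ∈ Icc 1 k, 1 / (m ! : ℝ) := by
    rw [hfactor, det_mul_diagonal_mul_transpose_of_isLowerTriangular
      (shiftExpMatrix_isLowerTriangular c k) (shiftExpMatrix_diag c k),
      Fin.prod_univ_eq_prod_range (starWeight c), prod_starWeight c hk]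
  refine ⟨hdet, hdet ▸ ?_⟩
  have : 0 < ∏ m ∈ Icc 1 k, 1 / (m ! : ℝ) := prod_pos fun m _ => by positivity
  positivity
end

section
/- For the Erdős–Rényi random graph G(n,p) with a fixed constant p in (0,1) and fixed m >= 1, the variance of the number of (m+1)-stars satisfies Var[S_{m+1,n}] ~ (2/((m-1)!)^2) * n^{2m} p^{2m-1} (1-p) as n -> infinity; i.e., the ratio of the two sides tends to 1. -/
/-!
Write the star count as `∑ σ, T σ`, where a star `σ = (i, A)` has centre `i` and an `m`-set `A`
of leaves, and `T σ` is the product of the independent indicators of its `m` edges. Then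
`Cov(T σ, T τ) = p ^ (2m - k) - p ^ (2m)`, where `k` is the number of edges `σ` and `τ` share.
Stars with distinct centres `i ≠ i'` share at most the edge `ii'`, and they do so for exactly
`C(n-2, m-1)²` pairs of leaf sets, which contributes `n(n-1) C(n-2, m-1)² p^(2m-1)(1-p)`.
Stars with a common centre share `k = |A ∩ A'|` edges; the covariance is `k p^(2m-1)(1-p)` for
`k ≤ 1` and `O(1)` otherwise. Double counting gives `∑ k = (n-1) C(n-2, m-1)²` per centre, the
same main term again, while `∑ C(k, 2) = O(n^(2m-2))` controls the pairs sharing two leaves.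
So the variance is `2n(n-1) C(n-2, m-1)² p^(2m-1)(1-p) + O(n^(2m-1))`, and
`C(n-2, m-1) ~ n^(m-1) / (m-1)!`.
-/

open MeasureTheory ProbabilityTheory Finset Filter

/-- The number of `(m+1)`-stars in a graph on `Fin n` with edge indicators `X`. -/
def starCount (n m : ℕ) {Ω : Type*} (X : Fin n → Fin n → Ω → ℝ) (ω : Ω) : ℝ :=
  ∑ i, ∑ A ∈ (Finset.univ.erase i).powersetCard m, ∏ j ∈ A, X i j ω

section ZeroOneProducts

variable {ι Ω : Type*} {Y : ι → Ω → ℝ}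

lemma prod_mul_prod_eq_prod_union_of_zero_one [DecidableEq ι] (h01 : ∀ e ω, Y e ω = 0 ∨ Y e ω = 1)
    (s t : Finset ι) (ω : Ω) :
    (∏ e ∈ s, Y e ω) * ∏ e ∈ t, Y e ω = ∏ e ∈ s ∪ t, Y e ω := by
  rw [← prod_union_inter]
  by_cases h : ∃ e ∈ s ∩ t, Y e ω = 0
  · obtain ⟨e, he, hzero⟩ := h
    rw [prod_eq_zero he hzero, prod_eq_zero (mem_union_left _ (mem_inter.mp he).1) hzero,
      mul_zero]
  · rw [prod_eq_one fun e he => (h01 e ω).resolve_left fun h0 => h ⟨e, he, h0⟩, mul_one]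

variable [MeasurableSpace Ω] {μ : Measure Ω}

lemma memLp_prod_of_zero_one [IsFiniteMeasure μ] (hmeas : ∀ e, Measurable (Y e))
    (h01 : ∀ e ω, Y e ω = 0 ∨ Y e ω = 1) (s : Finset ι) :
    MemLp (fun ω => ∏ e ∈ s, Y e ω) 2 μ := by
  refine MemLp.of_bound (Finset.measurable_prod s fun e _ => hmeas e).aestronglyMeasurable 1
    (ae_of_all _ fun ω => ?_)
  rw [Real.norm_eq_abs, abs_prod]
  exact prod_le_one (fun e _ => abs_nonneg _) fun e _ => by rcases h01 e ω with h | h <;> simp [h]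

lemma integral_eq_measureReal_of_zero_one {f : Ω → ℝ} (hf : Measurable f)
    (h01 : ∀ ω, f ω = 0 ∨ f ω = 1) : ∫ ω, f ω ∂μ = μ.real {ω | f ω = 1} := by
  have : f = {ω | f ω = 1}.indicator 1 := by
    ext ω
    rcases h01 ω with h | h <;> simp [h]
  rw [this, integral_indicator_one (measurableSet_eq_fun hf measurable_const)]
  congr 1
  ext ω
  rcases h01 ω with h | h <;> simp [h]

lemma integral_prod_eq_pow_card [Fintype ι] {p : ℝ} (hp : 0 ≤ p)
    (hmeas : ∀ e, Measurable (Y e)) (h01 : ∀ e ω, Y e ω = 0 ∨ Y e ω = 1)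
    (hbern : ∀ e, μ {ω | Y e ω = 1} = ENNReal.ofReal p) (hindep : iIndepFun Y μ) :
    ∫ ω, ∏ e, Y e ω ∂μ = p ^ Fintype.card ι := by
  rw [hindep.integral_fun_prod_eq_prod_integral fun e => (hmeas e).aestronglyMeasurable]
  have hmean : ∀ e, ∫ ω, Y e ω ∂μ = p := fun e => by
    rw [integral_eq_measureReal_of_zero_one (hmeas e) (h01 e), measureReal_def, hbern e,
      ENNReal.toReal_ofReal hp]
  simp [hmean]

theorem variance_sum_prod_of_zero_one [IsProbabilityMeasure μ] [DecidableEq ι] {κ : Type*}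
    {p : ℝ} (hmeas : ∀ e, Measurable (Y e)) (h01 : ∀ e ω, Y e ω = 0 ∨ Y e ω = 1) {D : Set ι}
    (hmoment : ∀ s : Finset ι, ↑s ⊆ D → ∫ ω, ∏ e ∈ s, Y e ω ∂μ = p ^ #s)
    (K : Finset κ) (E : κ → Finset ι) (hE : ∀ k ∈ K, ↑(E k) ⊆ D) :
    Var[fun ω => ∑ k ∈ K, ∏ e ∈ E k, Y e ω; μ]
      = ∑ k ∈ K, ∑ l ∈ K, (p ^ #(E k ∪ E l) - p ^ #(E k) * p ^ #(E l)) := by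
  have hL2 : ∀ k ∈ K, MemLp (fun ω => ∏ e ∈ E k, Y e ω) 2 μ :=
    fun k _ => memLp_prod_of_zero_one hmeas h01 (E k)
  rw [← Finset.sum_fn, variance_sum' hL2]
  refine sum_congr rfl fun k hk => sum_congr rfl fun l hl => ?_
  rw [covariance_eq_sub (hL2 k hk) (hL2 l hl)]
  simp only [Pi.mul_apply, prod_mul_prod_eq_prod_union_of_zero_one h01, hmoment _ (hE k hk),
    hmoment _ (hE l hl), hmoment _ (by simpa using ⟨hE k hk, hE l hl⟩ : ↑(E k ∪ E l) ⊆ D)]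

end ZeroOneProducts

section StarEdges

variable {α : Type*} [DecidableEq α]

def starEdges (i : α) (A : Finset α) : Finset (Sym2 α) := A.image fun j => s(i, j)

lemma card_starEdges (i : α) (A : Finset α) : #(starEdges i A) = #A :=
  card_image_of_injective A fun _ _ => Sym2.congr_right.mp

lemma starEdges_inter_starEdges (i : α) (A A' : Finset α) :
    starEdges i A ∩ starEdges i A' = starEdges i (A ∩ A') :=
  (image_inter A A' fun _ _ => Sym2.congr_right.mp).symm

lemma card_starEdges_inter_starEdges_of_ne {i i' : α} (h : i ≠ i') (A A' : Finset α) :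
    #(starEdges i A ∩ starEdges i' A') = if i' ∈ A ∧ i ∈ A' then 1 else 0 := by
  have : starEdges i A ∩ starEdges i' A' = if i' ∈ A ∧ i ∈ A' then {s(i, i')} else ∅ := by
    ext z
    induction z with | _ a b => ?_
    simp only [starEdges, mem_inter, mem_image, Sym2.eq_iff]
    split_ifs <;> simp only [mem_singleton, Sym2.eq_iff, notMem_empty] <;> grind
  rw [this]
  split_ifs <;> simp

lemma not_isDiag_of_mem_starEdges {i : α} {A : Finset α} (hi : i ∉ A) {z : Sym2 α}
    (hz : z ∈ starEdges i A) : ¬ z.IsDiag := by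
  obtain ⟨j, hj, rfl⟩ := mem_image.mp hz
  exact Sym2.mk_isDiag_iff.not.mpr fun h => hi (h ▸ hj)

lemma card_filter_mem_powersetCard_erase [Fintype α] {i i' : α} (h : i ≠ i') {m : ℕ}
    (hm : 1 ≤ m) :
    #{A ∈ (univ.erase i).powersetCard m | i' ∈ A} = (Fintype.card α - 2).choose (m - 1) := by
  simp_rw [← singleton_subset_iff]
  rw [card_filter_powersetCard_subset {i'} _ m (by simpa using h.symm) (by simpa using hm),
    card_erase_of_mem (mem_univ i), card_univ, card_singleton, Nat.sub_sub]

theorem sum_sum_pow_starEdges_of_ne [Fintype α] {i i' : α} (h : i ≠ i') {m : ℕ} (hm : 1 ≤ m)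
    (p : ℝ) :
    ∑ A ∈ (univ.erase i).powersetCard m, ∑ A' ∈ (univ.erase i').powersetCard m,
      (p ^ (2 * m - #(starEdges i A ∩ starEdges i' A')) - p ^ (2 * m))
      = p ^ (2 * m - 1) * (1 - p) * ((Fintype.card α - 2).choose (m - 1) : ℝ) ^ 2 := by
  have hterm : ∀ A A', p ^ (2 * m - #(starEdges i A ∩ starEdges i' A')) - p ^ (2 * m)
      = p ^ (2 * m - 1) * (1 - p) * ((if i' ∈ A then 1 else 0) * (if i ∈ A' then 1 else 0)) := by
    intro A A'
    rw [card_starEdges_inter_starEdges_of_ne h]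
    have hpow : p ^ (2 * m - 1) - p ^ (2 * m) = p ^ (2 * m - 1) * (1 - p) := by
      rw [mul_sub, mul_one, ← pow_succ, Nat.sub_add_cancel (by omega)]
    by_cases hA : i' ∈ A <;> by_cases hA' : i ∈ A' <;> simp [hA, hA', hpow]
  simp_rw [hterm, ← mul_sum, ← sum_mul, sum_boole, card_filter_mem_powersetCard_erase h hm,
    card_filter_mem_powersetCard_erase h.symm hm, sq]

theorem sum_sum_sum_pow_starEdges [Fintype α] (i : α) {m : ℕ} (hm : 1 ≤ m) (p : ℝ) :
    ∑ i', ∑ A ∈ (univ.erase i).powersetCard m, ∑ A' ∈ (univ.erase i').powersetCard m,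
      (p ^ (2 * m - #(starEdges i A ∩ starEdges i' A')) - p ^ (2 * m))
      = ∑ A ∈ (univ.erase i).powersetCard m, ∑ A' ∈ (univ.erase i).powersetCard m,
          (p ^ (2 * m - #(A ∩ A')) - p ^ (2 * m))
        + (Fintype.card α - 1 : ℕ) * (p ^ (2 * m - 1) * (1 - p)
          * ((Fintype.card α - 2).choose (m - 1) : ℝ) ^ 2) := by
  rw [← add_sum_erase _ _ (mem_univ i), sum_congr rfl fun i' hi' =>
    sum_sum_pow_starEdges_of_ne (mem_erase.mp hi').1.symm hm p, sum_const,
    card_erase_of_mem (mem_univ i), card_univ, nsmul_eq_mul]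
  simp_rw [starEdges_inter_starEdges, card_starEdges]

end StarEdges

section Overlaps

variable {α : Type*} [DecidableEq α]

theorem sum_sum_choose_card_inter (S : Finset α) {j m : ℕ} (hjm : j ≤ m) :
    ∑ A ∈ S.powersetCard m, ∑ A' ∈ S.powersetCard m, (#(A ∩ A')).choose j
      = (#S).choose j * ((#S - j).choose (m - j)) ^ 2 := by
  have hcount : ∀ B ∈ S.powersetCard j, ∑ A ∈ S.powersetCard m, (if B ⊆ A then 1 else 0)
      = (#S - j).choose (m - j) := fun B hB => by
    obtain ⟨hBS, hcard⟩ := mem_powersetCard.mp hB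
    rw [← card_filter, card_filter_powersetCard_subset B S m hBS (hcard ▸ hjm), hcard]
  calc ∑ A ∈ S.powersetCard m, ∑ A' ∈ S.powersetCard m, (#(A ∩ A')).choose j
      = ∑ A ∈ S.powersetCard m, ∑ A' ∈ S.powersetCard m, ∑ B ∈ S.powersetCard j,
          (if B ⊆ A then 1 else 0) * (if B ⊆ A' then 1 else 0) := by
        refine sum_congr rfl fun A hA => sum_congr rfl fun A' _ => ?_
        have : (A ∩ A').powersetCard j = {B ∈ S.powersetCard j | B ⊆ A ∧ B ⊆ A'} := by
          ext B
          simp only [mem_powersetCard, mem_filter, subset_inter_iff]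
          exact ⟨fun h => ⟨⟨h.1.1.trans (mem_powersetCard.mp hA).1, h.2⟩, h.1⟩,
            fun h => ⟨h.2, h.1.2⟩⟩
        rw [← card_powersetCard, this, card_filter]
        simp_rw [ite_zero_mul_ite_zero, mul_one]
    _ = ∑ B ∈ S.powersetCard j, (∑ A ∈ S.powersetCard m, if B ⊆ A then 1 else 0)
          * ∑ A' ∈ S.powersetCard m, if B ⊆ A' then 1 else 0 := by
        simp_rw [sum_mul_sum]
        exact (sum_congr rfl fun _ _ => sum_comm).trans sum_comm
    _ = (#S).choose j * ((#S - j).choose (m - j)) ^ 2 := by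
        rw [sum_congr rfl fun B hB => by rw [hcount B hB, ← sq], sum_const, card_powersetCard,
          smul_eq_mul]

theorem sum_sum_choose_two_card_inter_le (S : Finset α) (m : ℕ) :
    ∑ A ∈ S.powersetCard m, ∑ A' ∈ S.powersetCard m, (#(A ∩ A')).choose 2 ≤ #S ^ (2 * m - 2) := by
  rcases lt_or_ge m 2 with hm | hm
  · refine (sum_eq_zero fun A hA => sum_eq_zero fun A' _ => Nat.choose_eq_zero_of_lt ?_).trans_le
      (Nat.zero_le _)
    exact ((card_le_card inter_subset_left).trans (mem_powersetCard.mp hA).2.le).trans_lt hm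
  rw [sum_sum_choose_card_inter S hm]
  calc (#S).choose 2 * ((#S - 2).choose (m - 2)) ^ 2 ≤ #S ^ 2 * (#S ^ (m - 2)) ^ 2 := by
        gcongr
        · exact Nat.choose_le_pow _ _
        · exact (Nat.choose_le_pow _ _).trans (Nat.pow_le_pow_left (Nat.sub_le _ _) _)
    _ = #S ^ (2 * m - 2) := by rw [← pow_mul, ← pow_add]; congr 1; omega

lemma abs_pow_sub_pow_sub_le {p : ℝ} (hp0 : 0 ≤ p) (hp1 : p ≤ 1) {k m : ℕ} (hk : k ≤ m) :
    |p ^ (2 * m - k) - p ^ (2 * m) - k * (p ^ (2 * m - 1) * (1 - p))| ≤ (m + 1) * k.choose 2 := by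
  rcases Nat.lt_or_ge k 2 with hk2 | hk2
  · interval_cases k
    · simp
    · have : p ^ (2 * m) = p ^ (2 * m - 1) * p := by rw [← pow_succ]; congr 1; omega
      simp [this, mul_sub]
  have hchoose : (1 : ℝ) ≤ k.choose 2 := by exact_mod_cast Nat.choose_pos hk2
  have hdiff : |p ^ (2 * m - k) - p ^ (2 * m)| ≤ 1 :=
    abs_sub_le_of_nonneg_of_le (pow_nonneg hp0 _) (pow_le_one₀ hp0 hp1) (pow_nonneg hp0 _)
      (pow_le_one₀ hp0 hp1)
  have hlin : |k * (p ^ (2 * m - 1) * (1 - p))| ≤ m := by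
    rw [abs_of_nonneg (by have := pow_nonneg hp0 (2 * m - 1); positivity)]
    calc (k : ℝ) * (p ^ (2 * m - 1) * (1 - p)) ≤ k * (1 * 1) := by
          gcongr
          · exact pow_le_one₀ hp0 hp1
          · linarith
      _ ≤ m := by simpa using (Nat.cast_le.mpr hk : (k : ℝ) ≤ m)
  calc _ ≤ |p ^ (2 * m - k) - p ^ (2 * m)| + |k * (p ^ (2 * m - 1) * (1 - p))| := abs_sub _ _
    _ ≤ (m + 1) * 1 := by linarith
    _ ≤ (m + 1) * k.choose 2 := by gcongr

theorem abs_sum_sum_pow_sub_le (S : Finset α) {m : ℕ} (hm : 1 ≤ m) {p : ℝ} (hp0 : 0 ≤ p)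
    (hp1 : p ≤ 1) :
    |∑ A ∈ S.powersetCard m, ∑ A' ∈ S.powersetCard m, (p ^ (2 * m - #(A ∩ A')) - p ^ (2 * m))
      - p ^ (2 * m - 1) * (1 - p) * #S * ((#S - 1).choose (m - 1) : ℝ) ^ 2|
      ≤ (m + 1) * (#S : ℝ) ^ (2 * m - 2) := by
  have hlin : ∑ A ∈ S.powersetCard m, ∑ A' ∈ S.powersetCard m, (#(A ∩ A') : ℝ)
      = #S * ((#S - 1).choose (m - 1) : ℝ) ^ 2 := by
    have := sum_sum_choose_card_inter S (j := 1) hm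
    simp only [Nat.choose_one_right] at this
    exact_mod_cast this
  have hquad := sum_sum_choose_two_card_inter_le S m
  set c := p ^ (2 * m - 1) * (1 - p)
  calc _ = |∑ A ∈ S.powersetCard m, ∑ A' ∈ S.powersetCard m,
          (p ^ (2 * m - #(A ∩ A')) - p ^ (2 * m) - #(A ∩ A') * c)| := by
        rw [mul_assoc, ← hlin, mul_sum]
        simp_rw [mul_sum, ← sum_sub_distrib, mul_comm c]
    _ ≤ ∑ A ∈ S.powersetCard m, ∑ A' ∈ S.powersetCard m, (m + 1) * ((#(A ∩ A')).choose 2 : ℝ) :=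
        (abs_sum_le_sum_abs _ _).trans <| sum_le_sum fun A hA => (abs_sum_le_sum_abs _ _).trans <|
          sum_le_sum fun A' _ => abs_pow_sub_pow_sub_le hp0 hp1 <|
            (card_le_card inter_subset_left).trans (mem_powersetCard.mp hA).2.le
    _ ≤ (m + 1) * (#S : ℝ) ^ (2 * m - 2) := by
        simp_rw [← mul_sum]
        gcongr
        exact_mod_cast hquad

end Overlaps

section RandomGraph

variable {α : Type*} [LinearOrder α]

lemma prod_eq_prod_starEdges {β : Type*} [CommMonoid β] {f : α → α → β}
    (hsym : ∀ i j, f i j = f j i) (i : α) (A : Finset α) :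
    ∏ j ∈ A, f i j = ∏ z ∈ starEdges i A, f z.inf z.sup := by
  rw [starEdges, prod_image fun _ _ _ _ => Sym2.congr_right.mp]
  refine prod_congr rfl fun j _ => ?_
  rcases le_total i j with h | h
  · simp [h]
  · simp [h, hsym i j]

lemma Sym2.inf_lt_sup_of_not_isDiag {z : Sym2 α} (hz : ¬ z.IsDiag) : z.inf < z.sup := by
  induction z with | _ a b => simpa [inf_lt_sup, eq_comm] using hz

variable {Ω : Type*} [MeasurableSpace Ω] {μ : Measure Ω} {X : α → α → Ω → ℝ} {p : ℝ}

lemma integral_prod_inf_sup (hp : 0 ≤ p) (hmeas : ∀ i j, Measurable (X i j))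
    (h01 : ∀ i j ω, X i j ω = 0 ∨ X i j ω = 1)
    (hbern : ∀ i j, i ≠ j → μ {ω | X i j ω = 1} = ENNReal.ofReal p)
    (hindep : iIndepFun (fun (q : {q : α × α // q.1 < q.2}) ω => X q.1.1 q.1.2 ω) μ)
    (s : Finset (Sym2 α)) (hs : ∀ z ∈ s, ¬ z.IsDiag) :
    ∫ ω, ∏ z ∈ s, X z.inf z.sup ω ∂μ = p ^ #s := by
  let g : s → {q : α × α // q.1 < q.2} := fun z =>
    ⟨(z.1.inf, z.1.sup), Sym2.inf_lt_sup_of_not_isDiag (hs z z.2)⟩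
  have hg : Function.Injective g := fun z w h =>
    Subtype.ext (Sym2.inf_eq_inf_and_sup_eq_sup.mp (by simpa [g] using h))
  simp_rw [← prod_coe_sort s, ← Fintype.card_coe s]
  exact integral_prod_eq_pow_card hp (fun _ => hmeas _ _) (fun _ => h01 _ _)
    (fun z => hbern _ _ (g z).2.ne) (hindep.precomp hg)

end RandomGraph

section StarVariance

variable {Ω : Type*} [MeasurableSpace Ω] {μ : Measure Ω} {n m : ℕ} {X : Fin n → Fin n → Ω → ℝ}
  {p : ℝ}

lemma memLp_starCount [IsFiniteMeasure μ] (hmeas : ∀ i j, Measurable (X i j))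
    (h01 : ∀ i j ω, X i j ω = 0 ∨ X i j ω = 1) : MemLp (starCount n m X) 2 μ :=
  memLp_finsetSum _ fun i _ => memLp_finsetSum _ fun _ _ =>
    memLp_prod_of_zero_one (hmeas i) (h01 i) _

variable [IsProbabilityMeasure μ]

theorem variance_starCount_eq_sum (hp : 0 ≤ p) (hmeas : ∀ i j, Measurable (X i j))
    (hsym : ∀ i j, X i j = X j i) (h01 : ∀ i j ω, X i j ω = 0 ∨ X i j ω = 1)
    (hbern : ∀ i j, i ≠ j → μ {ω | X i j ω = 1} = ENNReal.ofReal p)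
    (hindep : iIndepFun (fun (q : {q : Fin n × Fin n // q.1 < q.2}) ω => X q.1.1 q.1.2 ω) μ) :
    Var[starCount n m X; μ] = ∑ i : Fin n, ∑ i' : Fin n, ∑ A ∈ (univ.erase i).powersetCard m,
      ∑ A' ∈ (univ.erase i').powersetCard m,
        (p ^ (2 * m - #(starEdges i A ∩ starEdges i' A')) - p ^ (2 * m)) := by
  have hP : ∀ x ∈ univ.sigma fun i : Fin n => (univ.erase i).powersetCard m,
      x.1 ∉ x.2 ∧ #x.2 = m := fun x hx => by
    obtain ⟨hsub, hcard⟩ := mem_powersetCard.mp (mem_sigma.mp hx).2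
    exact ⟨fun h => (mem_erase.mp (hsub h)).1 rfl, hcard⟩
  have hS : starCount n m X = fun ω => ∑ x ∈ univ.sigma fun i => (univ.erase i).powersetCard m,
      ∏ z ∈ starEdges x.1 x.2, X z.inf z.sup ω := by
    ext ω
    rw [starCount, sum_sigma]
    simp_rw [prod_eq_prod_starEdges (f := fun i j => X i j ω) fun i j => congrFun (hsym i j) ω]
  rw [hS, variance_sum_prod_of_zero_one (D := {z : Sym2 (Fin n) | ¬ z.IsDiag})
    (fun _ => hmeas _ _) (fun _ => h01 _ _) (integral_prod_inf_sup hp hmeas h01 hbern hindep)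
    _ _ fun x hx _ hz => not_isDiag_of_mem_starEdges (hP x hx).1 hz, sum_sigma]
  simp_rw [sum_sigma]
  refine sum_congr rfl fun i _ => ?_
  rw [sum_comm]
  refine sum_congr rfl fun i' _ => sum_congr rfl fun A hA => sum_congr rfl fun A' hA' => ?_
  rw [card_union, card_starEdges, card_starEdges, (mem_powersetCard.mp hA).2,
    (mem_powersetCard.mp hA').2, ← pow_add, two_mul]

theorem variance_starCount (hm : 1 ≤ m) (hp : 0 ≤ p) (hmeas : ∀ i j, Measurable (X i j))
    (hsym : ∀ i j, X i j = X j i) (h01 : ∀ i j ω, X i j ω = 0 ∨ X i j ω = 1)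
    (hbern : ∀ i j, i ≠ j → μ {ω | X i j ω = 1} = ENNReal.ofReal p)
    (hindep : iIndepFun (fun (q : {q : Fin n × Fin n // q.1 < q.2}) ω => X q.1.1 q.1.2 ω) μ) :
    Var[starCount n m X; μ] = ∑ i : Fin n, ∑ A ∈ (univ.erase i).powersetCard m,
        ∑ A' ∈ (univ.erase i).powersetCard m, (p ^ (2 * m - #(A ∩ A')) - p ^ (2 * m))
      + n * (n - 1 : ℕ) * (p ^ (2 * m - 1) * (1 - p) * ((n - 2).choose (m - 1) : ℝ) ^ 2) := by
  rw [variance_starCount_eq_sum hp hmeas hsym h01 hbern hindep,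
    sum_congr rfl fun i _ => sum_sum_sum_pow_starEdges i hm p, sum_add_distrib, sum_const,
    card_univ, Fintype.card_fin, nsmul_eq_mul, ← mul_assoc]

theorem abs_variance_starCount_sub_le (hm : 1 ≤ m) (hp0 : 0 ≤ p) (hp1 : p ≤ 1)
    (hmeas : ∀ i j, Measurable (X i j))
    (hsym : ∀ i j, X i j = X j i) (h01 : ∀ i j ω, X i j ω = 0 ∨ X i j ω = 1)
    (hbern : ∀ i j, i ≠ j → μ {ω | X i j ω = 1} = ENNReal.ofReal p)
    (hindep : iIndepFun (fun (q : {q : Fin n × Fin n // q.1 < q.2}) ω => X q.1.1 q.1.2 ω) μ) :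
    |Var[starCount n m X; μ] - 2 * (p ^ (2 * m - 1) * (1 - p)) * n * (n - 1 : ℕ)
      * ((n - 2).choose (m - 1) : ℝ) ^ 2| ≤ (m + 1) * (n : ℝ) ^ (2 * m - 1) := by
  set c := p ^ (2 * m - 1) * (1 - p)
  set C := ((n - 2).choose (m - 1) : ℝ)
  have hsplit : ∀ x : ℝ, x + n * (n - 1 : ℕ) * (c * C ^ 2) - 2 * c * n * (n - 1 : ℕ) * C ^ 2
      = x - ∑ _i : Fin n, c * (n - 1 : ℕ) * C ^ 2 := fun x => by
    simp only [sum_const, card_univ, Fintype.card_fin, nsmul_eq_mul]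
    ring
  rw [variance_starCount hm hp0 hmeas hsym h01 hbern hindep, hsplit, ← sum_sub_distrib]
  calc _ ≤ ∑ _i : Fin n, (m + 1) * ((n - 1 : ℕ) : ℝ) ^ (2 * m - 2) :=
        (abs_sum_le_sum_abs _ _).trans <| sum_le_sum fun i _ => by
          simpa [card_erase_of_mem, Nat.sub_sub] using
            abs_sum_sum_pow_sub_le (univ.erase i) hm hp0 hp1
    _ ≤ (m + 1) * (n : ℝ) ^ (2 * m - 1) := by
        rw [sum_const, card_univ, Fintype.card_fin, nsmul_eq_mul,
          show 2 * m - 1 = 2 * m - 2 + 1 by omega, pow_succ, mul_comm _ (n : ℝ), mul_left_comm]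
        gcongr
        exact_mod_cast Nat.sub_le n 1

end StarVariance

section Asymptotics

open Asymptotics

lemma isEquivalent_natCast_sub (a : ℕ) :
    (fun n : ℕ => ((n - a : ℕ) : ℝ)) ~[atTop] fun n => (n : ℝ) := by
  refine (IsEquivalent.refl.add_isLittleO (w := fun _ => -(a : ℝ)) ?_).congr_left ?_
  · exact isLittleO_const_left.mpr <| .inr <|
      tendsto_norm_atTop_atTop.comp tendsto_natCast_atTop_atTop
  · filter_upwards [eventually_ge_atTop a] with n hn
    simp [Nat.cast_sub hn, sub_eq_add_neg]

lemma isEquivalent_choose_sub (a k : ℕ) :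
    (fun n : ℕ => ((n - a).choose k : ℝ)) ~[atTop] fun n => (n : ℝ) ^ k / k.factorial :=
  ((isEquivalent_choose k).comp_tendsto (tendsto_sub_atTop_nat a)).trans
    (((isEquivalent_natCast_sub a).pow k).div IsEquivalent.refl)

theorem tendsto_div_of_sub_isBigO {m : ℕ} (hm : 1 ≤ m) {p : ℝ} (hp0 : 0 < p) (hp1 : p < 1)
    {V : ℕ → ℝ} (hV : (fun n : ℕ => V n - 2 * (p ^ (2 * m - 1) * (1 - p)) * n * (n - 1 : ℕ)
      * ((n - 2).choose (m - 1) : ℝ) ^ 2) =O[atTop] fun n : ℕ => (n : ℝ) ^ (2 * m - 1)) :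
    Tendsto (fun n : ℕ => V n /
      ((2 / ((m - 1).factorial : ℝ) ^ 2) * (n : ℝ) ^ (2 * m) * p ^ (2 * m - 1) * (1 - p)))
      atTop (nhds 1) := by
  set c := p ^ (2 * m - 1) * (1 - p)
  set K := 2 / ((m - 1).factorial : ℝ) ^ 2 * c
  have hK : K ≠ 0 := by
    have : 0 < c := mul_pos (pow_pos hp0 _) (by linarith)
    positivity
  have hmain : (fun n : ℕ => 2 * c * n * (n - 1 : ℕ) * ((n - 2).choose (m - 1) : ℝ) ^ 2)
      ~[atTop] fun n : ℕ => K * (n : ℝ) ^ (2 * m) := by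
    refine ((((IsEquivalent.refl (u := fun _ : ℕ => 2 * c)).mul IsEquivalent.refl).mul
      (isEquivalent_natCast_sub 1)).mul ((isEquivalent_choose_sub 2 (m - 1)).pow 2)).congr_right
      (.of_forall fun n => ?_)
    obtain ⟨k, rfl⟩ : ∃ k, m = k + 1 := ⟨m - 1, by omega⟩
    simp only [Pi.mul_apply, Pi.pow_apply, K, Nat.add_sub_cancel,
      show 2 * (k + 1) = 2 * k + 2 by ring]
    ring
  have herr : (fun n : ℕ => V n - 2 * c * n * (n - 1 : ℕ) * ((n - 2).choose (m - 1) : ℝ) ^ 2)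
      =o[atTop] fun n : ℕ => K * (n : ℝ) ^ (2 * m) :=
    hV.trans_isLittleO <| ((isLittleO_pow_pow_atTop_of_lt (by omega)).comp_tendsto
      tendsto_natCast_atTop_atTop).trans_isBigO (isBigO_self_const_mul hK _ _)
  have hz : ∀ᶠ n : ℕ in atTop, K * (n : ℝ) ^ (2 * m) ≠ 0 := by
    filter_upwards [eventually_ge_atTop 1] with n hn
    have : (0 : ℝ) < n := by exact_mod_cast hn
    positivity
  refine ((isEquivalent_iff_tendsto_one hz).mp <| (hmain.add_isLittleO herr).congr_left (w := V)
    (.of_forall fun n => by simp)).congr fun n => ?_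
  simp only [Pi.div_apply, K]
  ring

end Asymptotics

theorem stmt_17_general (m : ℕ) (hm : 1 ≤ m) (p : ℝ) (hp0 : 0 < p) (hp1 : p < 1)
    (Ω : ℕ → Type*) [∀ n, MeasurableSpace (Ω n)]
    (μ : (n : ℕ) → Measure (Ω n)) (hprob : ∀ n, IsProbabilityMeasure (μ n))
    (X : (n : ℕ) → Fin n → Fin n → Ω n → ℝ)
    (hmeas : ∀ n i j, Measurable (X n i j))
    (hsym : ∀ n i j, X n i j = X n j i)
    (h01 : ∀ n i j ω, X n i j ω = 0 ∨ X n i j ω = 1)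
    (hbern : ∀ n i j, i ≠ j → μ n {ω | X n i j ω = 1} = ENNReal.ofReal p)
    (hindep : ∀ n, iIndepFun
      (fun (q : {q : Fin n × Fin n // q.1 < q.2}) ω => X n q.1.1 q.1.2 ω) (μ n)) :
    Tendsto (fun n : ℕ =>
        ((∫ ω, (starCount n m (X n) ω) ^ 2 ∂ μ n) -
          (∫ ω, starCount n m (X n) ω ∂ μ n) ^ 2) /
        ((2 / ((m - 1).factorial : ℝ) ^ 2) * (n : ℝ) ^ (2 * m) * p ^ (2 * m - 1) * (1 - p)))
      atTop (nhds 1) := by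
  refine tendsto_div_of_sub_isBigO hm hp0 hp1 <| Asymptotics.IsBigO.of_bound (m + 1) <|
    .of_forall fun n => ?_
  have := hprob n
  have hvar := variance_eq_sub (memLp_starCount (μ := μ n) (m := m) (hmeas n) (h01 n))
  simp only [Pi.pow_apply] at hvar
  rw [← hvar, Real.norm_eq_abs, Real.norm_of_nonneg (by positivity)]
  exact abs_variance_starCount_sub_le hm hp0.le hp1.le (hmeas n) (hsym n) (h01 n) (hbern n)
    (hindep n)

/-- For fixed `p ∈ (0,1)` and fixed `m ≥ 1`,
`Var[S_{m+1,n}] ~ (2/((m-1)!)²) n^{2m} p^{2m-1} (1-p)` as `n → ∞`,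
i.e. the ratio of the two sides tends to `1`. -/
theorem stmt_17 (m : ℕ) (hm : 1 ≤ m) (p : ℝ) (hp0 : 0 < p) (hp1 : p < 1)
    (Ω : ℕ → Type*) [∀ n, MeasurableSpace (Ω n)]
    (μ : (n : ℕ) → Measure (Ω n)) (hprob : ∀ n, IsProbabilityMeasure (μ n))
    (X : (n : ℕ) → Fin n → Fin n → Ω n → ℝ)
    (hmeas : ∀ n i j, Measurable (X n i j))
    (hsym : ∀ n i j, X n i j = X n j i)
    (hdiag : ∀ n i, X n i i = 0)
    (h01 : ∀ n i j ω, X n i j ω = 0 ∨ X n i j ω = 1)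
    (hbern : ∀ n i j, i ≠ j → μ n {ω | X n i j ω = 1} = ENNReal.ofReal p)
    (hindep : ∀ n, iIndepFun
      (fun (q : {q : Fin n × Fin n // q.1 < q.2}) ω => X n q.1.1 q.1.2 ω) (μ n)) :
    Tendsto (fun n : ℕ =>
        ((∫ ω, (starCount n m (X n) ω) ^ 2 ∂ μ n) -
          (∫ ω, starCount n m (X n) ω ∂ μ n) ^ 2) /
        ((2 / ((m - 1).factorial : ℝ) ^ 2) * (n : ℝ) ^ (2 * m) * p ^ (2 * m - 1) * (1 - p)))
      atTop (nhds 1) :=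
  stmt_17_general m hm p hp0 hp1 Ω μ hprob X hmeas hsym h01 hbern hindep
end
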